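/- arXiv:2512.01376 — 2 statements merged into one kernel-verified Lean document; each statement's English description precedes it below -/
import Mathlib

section
/- Let m ≥ 1 be a natural number and σ > 1/m a real number. Then the series ∑ n^{-σ}, taken over natural numbers n ≥ 1 such that every prime p dividing n satisfies p^m ∣ n, converges, and it equals the Euler product ∏_p (1 + 1/(p^{mσ} - p^{(m-1)σ})). -/
/-!
The function `f n = n ^ (-σ)` on `m`-full numbers, `0` elsewhere, is multiplicative, and with
`x = p ^ (-σ)` its local factor is `∑ₑ f (pᵉ) = 1 + ∑_{e ≥ m} xᵉ = 1 + xᵐ / (1 - x)`, which equals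
`1 + 1 / (p ^ (mσ) - p ^ ((m - 1)σ))`. Since `x ≤ 2 ^ (-σ) < 1`, the excess `xᵐ / (1 - x)` is
`O(p ^ (-mσ))`, summable over primes because `mσ > 1`. The partial sums of `f` are dominated by the
partial Euler products, hence bounded by `exp (∑ₚ xᵐ / (1 - x))`; so `f` is summable and the Euler
product theorem applies.
-/

open Real Finset

theorem summable_of_nonneg_of_summable_tsum_prime_pow_sub_one {f : ℕ → ℝ} (hf : ∀ n, 0 ≤ f n)
    (hf₀ : f 0 = 0) (hf₁ : f 1 = 1) (hmul : ∀ {a b : ℕ}, a.Coprime b → f (a * b) = f a * f b)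
    (hloc : ∀ {p : ℕ}, p.Prime → Summable fun e ↦ f (p ^ e))
    (hprimes : Summable fun p : Nat.Primes ↦ ∑' e, f (p ^ e) - 1) :
    Summable f := by
  set g : ℕ → ℝ := fun p ↦ ∑' e, f (p ^ e) - 1
  have hg : ∀ {p : ℕ}, p.Prime → 0 ≤ g p := fun hp ↦ by
    simpa [g, hf₁] using (hloc hp).le_tsum 0 fun j _ ↦ hf _
  refine summable_of_sum_range_le hf (c := exp (∑' p : Nat.Primes, g p)) fun N ↦ ?_
  have hsmooth := (EulerProduct.summable_and_hasSum_smoothNumbers_prod_primesBelow_tsum hf₁ hmul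
    (fun hp ↦ (hloc hp).abs) N).2
  have hrange : ∑ i ∈ range N, f i = ∑ i ∈ range N, N.smoothNumbers.indicator f i := by
    refine sum_congr rfl fun i hi ↦ ?_
    rcases i.eq_zero_or_pos with rfl | hi0
    · simp [Set.indicator_apply, hf₀]
    · rw [Set.indicator_of_mem (Nat.mem_smoothNumbers_of_lt hi0 (mem_range.mp hi))]
  have hprimesBelow : ∑ p ∈ N.primesBelow, g p ≤ ∑' p : Nat.Primes, g p := by
    rw [← sum_subtype_of_mem g fun p ↦ Nat.prime_of_mem_primesBelow]
    exact hprimes.sum_le_tsum (ι := Nat.Primes) _ fun p _ ↦ hg p.prop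
  calc ∑ i ∈ range N, f i
      ≤ ∑' n, N.smoothNumbers.indicator f n :=
        hrange ▸ (summable_subtype_iff_indicator.mp hsmooth.summable).sum_le_tsum _
          fun i _ ↦ Set.indicator_nonneg (fun k _ ↦ hf k) i
    _ = ∏ p ∈ N.primesBelow, (1 + g p) := by
        simp only [g, add_sub_cancel, ← _root_.tsum_subtype, hsmooth.tsum_eq]
    _ ≤ ∏ p ∈ N.primesBelow, exp (g p) := by
        refine prod_le_prod (fun p hp ↦ ?_) fun p _ ↦ ?_
        · linarith [hg (Nat.prime_of_mem_primesBelow hp)]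
        · linarith [add_one_le_exp (g p)]
    _ = exp (∑ p ∈ N.primesBelow, g p) := (exp_sum _ _).symm
    _ ≤ exp (∑' p : Nat.Primes, g p) := exp_le_exp.mpr hprimesBelow

namespace Nat

def fullNumbers (m : ℕ) : Set ℕ := {n | 1 ≤ n ∧ ∀ p : ℕ, p.Prime → p ∣ n → p ^ m ∣ n}

variable {m : ℕ}

theorem zero_notMem_fullNumbers : 0 ∉ fullNumbers m := fun h ↦ Nat.not_succ_le_zero 0 h.1

theorem one_mem_fullNumbers : 1 ∈ fullNumbers m :=
  ⟨le_rfl, fun _ hp hd ↦ (hp.not_dvd_one hd).elim⟩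

theorem mul_mem_fullNumbers_iff {a b : ℕ} (hab : a.Coprime b) :
    a * b ∈ fullNumbers m ↔ a ∈ fullNumbers m ∧ b ∈ fullNumbers m := by
  constructor
  · rintro ⟨hpos, hfull⟩
    refine ⟨⟨Nat.pos_of_mul_pos_right hpos, fun p hp hd ↦ ?_⟩,
      ⟨Nat.pos_of_mul_pos_left hpos, fun p hp hd ↦ ?_⟩⟩
    · exact ((hab.coprime_dvd_left hd).pow_left m).dvd_of_dvd_mul_right
        (hfull p hp (hd.mul_right b))
    · exact ((hab.coprime_dvd_right hd).symm.pow_left m).dvd_of_dvd_mul_left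
        (hfull p hp (hd.mul_left a))
  · rintro ⟨⟨ha, hfa⟩, ⟨hb, hfb⟩⟩
    refine ⟨Nat.mul_pos ha hb, fun p hp hd ↦ ?_⟩
    rcases hp.dvd_mul.mp hd with h | h
    · exact (hfa p hp h).mul_right b
    · exact (hfb p hp h).mul_left a

theorem pow_mem_fullNumbers_iff {p e : ℕ} (hp : p.Prime) :
    p ^ e ∈ fullNumbers m ↔ e = 0 ∨ m ≤ e := by
  constructor
  · refine fun h ↦ or_iff_not_imp_left.mpr fun he ↦ ?_
    exact (Nat.pow_dvd_pow_iff_le_right hp.one_lt).mp (h.2 p hp (dvd_pow_self p he))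
  · rintro (rfl | he)
    · exact pow_zero p ▸ one_mem_fullNumbers
    · refine ⟨Nat.one_le_iff_ne_zero.mpr (pow_ne_zero e hp.ne_zero), fun q hq hd ↦ ?_⟩
      rw [(Nat.prime_dvd_prime_iff_eq hq hp).mp (hq.dvd_of_dvd_pow hd)]
      exact pow_dvd_pow p he

theorem indicator_fullNumbers_mul {M : Type*} [MulZeroClass M] {g : ℕ → M}
    (hg : ∀ {a b : ℕ}, a.Coprime b → g (a * b) = g a * g b) {a b : ℕ} (hab : a.Coprime b) :
    (fullNumbers m).indicator g (a * b) =
      (fullNumbers m).indicator g a * (fullNumbers m).indicator g b := by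
  classical
  simp only [Set.indicator_apply, mul_mem_fullNumbers_iff hab]
  split_ifs <;> simp_all [hg hab]

end Nat

theorem hasSum_indicator_fullNumbers_rpow_prime_pow {m : ℕ} (hm : 1 ≤ m) {σ : ℝ} (hσ : 0 < σ)
    {p : ℕ} (hp : p.Prime) :
    HasSum (fun e ↦ (Nat.fullNumbers m).indicator (fun n : ℕ ↦ (n : ℝ) ^ (-σ)) (p ^ e))
      (1 + ((p : ℝ) ^ (-σ)) ^ m / (1 - (p : ℝ) ^ (-σ))) := by
  classical
  set x := (p : ℝ) ^ (-σ)
  have hx0 : 0 ≤ x := rpow_nonneg p.cast_nonneg _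
  have hx1 : x < 1 := rpow_lt_one_of_one_lt_of_neg (by exact_mod_cast hp.one_lt) (by linarith)
  have hterm : ∀ e, (Nat.fullNumbers m).indicator (fun n : ℕ ↦ (n : ℝ) ^ (-σ)) (p ^ e) =
      if e = 0 ∨ m ≤ e then x ^ e else 0 := fun e ↦ by
    simp only [Set.indicator_apply, Nat.pow_mem_fullNumbers_iff hp, Nat.cast_pow,
      ← rpow_pow_comm p.cast_nonneg, x]
  have hhead : ∑ e ∈ range m, (if e = 0 ∨ m ≤ e then x ^ e else 0) = 1 := by
    rw [sum_eq_single_of_mem 0 (mem_range.mpr hm) fun e he he0 ↦ if_neg (by simp at he; omega)]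
    simp
  have htail : ∀ e, (if e + m = 0 ∨ m ≤ e + m then x ^ (e + m) else 0) = x ^ m * x ^ e :=
    fun e ↦ by rw [if_pos (Or.inr (Nat.le_add_left m e)), pow_add, mul_comm]
  simp only [hterm]
  rw [← hasSum_nat_add_iff' m]
  simp only [hhead, htail, add_sub_cancel_left, div_eq_mul_inv]
  exact (hasSum_geometric_of_lt_one hx0 hx1).mul_left _

theorem summable_primes_rpow_neg_pow_div_one_sub {m : ℕ} {σ : ℝ} (hσ : 0 < σ)
    (hmσ : 1 < m * σ) :
    Summable fun p : Nat.Primes ↦ ((p : ℝ) ^ (-σ)) ^ m / (1 - (p : ℝ) ^ (-σ)) := by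
  have h2 : 0 < 1 - (2 : ℝ) ^ (-σ) :=
    sub_pos.mpr (rpow_lt_one_of_one_lt_of_neg one_lt_two (by linarith))
  have hx : ∀ p : Nat.Primes, 0 ≤ (p : ℝ) ^ (-σ) ∧ (p : ℝ) ^ (-σ) ≤ 2 ^ (-σ) := fun p ↦
    ⟨rpow_nonneg (Nat.cast_nonneg _) _,
      rpow_le_rpow_of_nonpos two_pos (by exact_mod_cast p.prop.two_le) (by linarith)⟩
  refine ((Nat.Primes.summable_rpow.mpr (by linarith : -(m * σ) < -1)).mul_left
    (1 - (2 : ℝ) ^ (-σ))⁻¹).of_nonneg_of_le (fun p ↦ ?_) fun p ↦ ?_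
  · exact div_nonneg (pow_nonneg (hx p).1 m) (by linarith [(hx p).2])
  · calc ((p : ℝ) ^ (-σ)) ^ m / (1 - (p : ℝ) ^ (-σ))
        ≤ ((p : ℝ) ^ (-σ)) ^ m / (1 - (2 : ℝ) ^ (-σ)) :=
          div_le_div_of_nonneg_left (pow_nonneg (hx p).1 m) h2 (by linarith [(hx p).2])
      _ = (1 - (2 : ℝ) ^ (-σ))⁻¹ * (p : ℝ) ^ (-(m * σ)) := by
          rw [← rpow_mul_natCast (Nat.cast_nonneg _), div_eq_inv_mul, neg_mul, mul_comm σ]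

theorem rpow_neg_pow_div_one_sub_eq {t σ : ℝ} (ht : 1 < t) (hσ : 0 < σ) {m : ℕ} (hm : 1 ≤ m) :
    (t ^ (-σ)) ^ m / (1 - t ^ (-σ)) = 1 / (t ^ (m * σ) - t ^ ((m - 1 : ℕ) * σ)) := by
  obtain ⟨k, rfl⟩ : ∃ k, m = k + 1 := ⟨m - 1, by omega⟩
  have hy : 1 < t ^ σ := one_lt_rpow ht hσ
  have ht0 : 0 ≤ t := by linarith
  rw [rpow_neg ht0, Nat.add_sub_cancel, mul_comm, rpow_mul_natCast ht0, mul_comm,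
    rpow_mul_natCast ht0]
  set y := t ^ σ
  have hy0 : y ≠ 0 := by positivity
  have hy1 : y - 1 ≠ 0 := by linarith
  rw [pow_succ y, ← mul_sub_one, inv_pow]
  field_simp
  ring

/-- For `m ≥ 1` and real `σ > 1/m`, the series `∑ n^{-σ}` over `m`-full numbers converges
and equals the Euler product `∏_p (1 + 1/(p^{mσ} - p^{(m-1)σ}))`. -/
theorem mfull_sum_eq_euler_product (m : ℕ) (hm : 1 ≤ m) (σ : ℝ) (hσ : 1 / m < σ) :
    Summable (fun n : {n : ℕ // 1 ≤ n ∧ ∀ p : ℕ, p.Prime → p ∣ n → p ^ m ∣ n} =>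
      ((n : ℕ) : ℝ) ^ (-σ)) ∧
    Multipliable (fun p : Nat.Primes =>
      (1 + 1 / ((p : ℝ) ^ (m * σ) - (p : ℝ) ^ ((m - 1 : ℕ) * σ)))) ∧
    (∑' n : {n : ℕ // 1 ≤ n ∧ ∀ p : ℕ, p.Prime → p ∣ n → p ^ m ∣ n}, ((n : ℕ) : ℝ) ^ (-σ))
      = ∏' p : Nat.Primes, (1 + 1 / ((p : ℝ) ^ (m * σ) - (p : ℝ) ^ ((m - 1 : ℕ) * σ))) := by
  have hm0 : (0 : ℝ) < m := by exact_mod_cast hm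
  have hσ0 : 0 < σ := (one_div_pos.mpr hm0).trans hσ
  have hmσ : 1 < m * σ := (div_lt_iff₀' hm0).mp hσ
  set f := (Nat.fullNumbers m).indicator fun n : ℕ ↦ (n : ℝ) ^ (-σ)
  have hf₀ : f 0 = 0 := Set.indicator_of_notMem Nat.zero_notMem_fullNumbers _
  have hf₁ : f 1 = 1 := by simp [f, Set.indicator_of_mem Nat.one_mem_fullNumbers]
  have hmul {a b : ℕ} (hab : a.Coprime b) : f (a * b) = f a * f b :=
    Nat.indicator_fullNumbers_mul
      (fun _ ↦ by push_cast; exact mul_rpow (by positivity) (by positivity)) hab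
  have hloc {p : ℕ} (hp : p.Prime) := hasSum_indicator_fullNumbers_rpow_prime_pow hm hσ0 hp
  have hsum : Summable f := by
    refine summable_of_nonneg_of_summable_tsum_prime_pow_sub_one
      (Set.indicator_nonneg fun n _ ↦ by positivity) hf₀ hf₁ hmul (fun hp ↦ (hloc hp).summable)
      ((summable_primes_rpow_neg_pow_div_one_sub hσ0 hmσ).congr fun p ↦ ?_)
    rw [(hloc p.prop).tsum_eq, add_sub_cancel_left]
  have hfactor (p : Nat.Primes) :
      ∑' e, f (p ^ e) = 1 + 1 / ((p : ℝ) ^ (m * σ) - (p : ℝ) ^ ((m - 1 : ℕ) * σ)) := by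
    rw [(hloc p.prop).tsum_eq,
      rpow_neg_pow_div_one_sub_eq (Nat.one_lt_cast.mpr p.prop.one_lt) hσ0 hm]
  have hprod := EulerProduct.eulerProduct_hasProd hf₁ hmul hsum.abs hf₀
  simp only [hfactor] at hprod
  exact ⟨summable_subtype_iff_indicator.mpr hsum, hprod.multipliable,
    (_root_.tsum_subtype _ _).trans hprod.tprod_eq.symm⟩
end

section
/- As real s → 1⁺, the prime zeta function satisfies P(s) = log(1/(s-1)) + O(1); i.e., there exist constants C > 0 and δ > 0 such that |P(s) - log(1/(s-1))| ≤ C for all real s with 1 < s < 1 + δ. -/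
/-!
Taking logarithms in the Euler product gives `log ζ(s) = ∑ₚ -log (1 - p^{-s})` for real `s > 1`.
Since `|x + log (1 - x)| ≤ 2x²` for `|x| ≤ 1/2`, this differs from `P(s)` by at most
`2 ∑ₚ p^{-2}`, uniformly in `s ≥ 1`; and the simple pole of `ζ` at `1` with residue `1` gives
`log ζ(s) + log (s - 1) → 0` as `s → 1⁺`.
-/

open Filter Topology

lemma Real.abs_add_log_one_sub_le {x : ℝ} (hx : |x| ≤ 1 / 2) :
    |x + Real.log (1 - x)| ≤ 2 * x ^ 2 := by
  have htaylor := Real.abs_log_sub_add_sum_range_le (x := x) (by linarith) 1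
  norm_num only [Finset.sum_range_one, zero_add, pow_one, Nat.cast_zero, div_one] at htaylor
  refine htaylor.trans ?_
  rw [div_le_iff₀ (by linarith), ← sq_abs x]
  nlinarith [sq_nonneg |x|]

lemma Nat.Primes.abs_rpow_neg_add_log_one_sub_le (p : Nat.Primes) {s : ℝ} (hs : 1 ≤ s) :
    |((p : ℕ) : ℝ) ^ (-s) + Real.log (1 - ((p : ℕ) : ℝ) ^ (-s))| ≤
      2 * ((p : ℕ) : ℝ) ^ (-2 : ℝ) := by
  have hp : (2 : ℝ) ≤ (p : ℕ) := mod_cast p.prop.two_le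
  have hx0 : 0 ≤ ((p : ℕ) : ℝ) ^ (-s) := by positivity
  have hx_half : ((p : ℕ) : ℝ) ^ (-s) ≤ 1 / 2 :=
    calc ((p : ℕ) : ℝ) ^ (-s) ≤ ((p : ℕ) : ℝ) ^ (-1 : ℝ) :=
          Real.rpow_le_rpow_of_exponent_le (by linarith) (by linarith)
      _ ≤ 1 / 2 := by rw [Real.rpow_neg_one, one_div]; exact inv_anti₀ two_pos hp
  have hx_sq : (((p : ℕ) : ℝ) ^ (-s)) ^ 2 ≤ ((p : ℕ) : ℝ) ^ (-2 : ℝ) := by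
    rw [← Real.rpow_mul_natCast (by linarith)]
    exact Real.rpow_le_rpow_of_exponent_le (by linarith) (by push_cast; linarith)
  calc _ ≤ 2 * (((p : ℕ) : ℝ) ^ (-s)) ^ 2 :=
        Real.abs_add_log_one_sub_le (by rwa [abs_of_nonneg hx0])
    _ ≤ _ := by linarith

lemma Nat.Primes.summable_rpow_neg_add_log_one_sub {s : ℝ} (hs : 1 ≤ s) :
    Summable fun p : Nat.Primes ↦ ((p : ℕ) : ℝ) ^ (-s) + Real.log (1 - ((p : ℕ) : ℝ) ^ (-s)) :=
  .of_norm_bounded (((Nat.Primes.summable_rpow (r := -2)).mpr (by norm_num)).mul_left 2)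
    fun p ↦ p.abs_rpow_neg_add_log_one_sub_le hs

lemma Nat.Primes.abs_tsum_rpow_neg_add_log_one_sub_le {s : ℝ} (hs : 1 ≤ s) :
    |∑' p : Nat.Primes, (((p : ℕ) : ℝ) ^ (-s) + Real.log (1 - ((p : ℕ) : ℝ) ^ (-s)))| ≤
      2 * ∑' p : Nat.Primes, ((p : ℕ) : ℝ) ^ (-2 : ℝ) := by
  rw [← Real.norm_eq_abs]
  exact tsum_of_norm_bounded
    (((Nat.Primes.summable_rpow (r := -2)).mpr (by norm_num)).hasSum.mul_left 2)
    fun p ↦ p.abs_rpow_neg_add_log_one_sub_le hs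

lemma log_re_riemannZeta_eq_tsum_primes {s : ℝ} (hs : 1 < s) :
    Real.log (riemannZeta s).re = ∑' p : Nat.Primes, -Real.log (1 - ((p : ℕ) : ℝ) ^ (-s)) := by
  have hterm (p : Nat.Primes) : -Complex.log (1 - (p : ℂ) ^ (-(s : ℂ))) =
      ((-Real.log (1 - ((p : ℕ) : ℝ) ^ (-s)) : ℝ) : ℂ) := by
    have hlt : ((p : ℕ) : ℝ) ^ (-s) < 1 :=
      Real.rpow_lt_one_of_one_lt_of_neg (mod_cast p.prop.one_lt) (by linarith)
    rw [Complex.ofReal_neg, Complex.ofReal_log (by linarith), Complex.ofReal_sub,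
      Complex.ofReal_one, Complex.ofReal_cpow (Nat.cast_nonneg _), Complex.ofReal_neg,
      Complex.ofReal_natCast]
  rw [← riemannZeta_eulerProduct_exp_log (by simpa using hs), tsum_congr hterm,
    ← Complex.ofReal_tsum, ← Complex.ofReal_exp, Complex.ofReal_re, Real.log_exp]

lemma tsum_prime_rpow_neg_sub_log_re_riemannZeta {s : ℝ} (hs : 1 < s) :
    (∑' p : Nat.Primes, ((p : ℕ) : ℝ) ^ (-s)) - Real.log (riemannZeta s).re =
      ∑' p : Nat.Primes, (((p : ℕ) : ℝ) ^ (-s) + Real.log (1 - ((p : ℕ) : ℝ) ^ (-s))) := by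
  have hP := (Nat.Primes.summable_rpow (r := -s)).mpr (by linarith)
  have hf := Nat.Primes.summable_rpow_neg_add_log_one_sub hs.le
  rw [log_re_riemannZeta_eq_tsum_primes hs,
    tsum_congr fun p : Nat.Primes ↦ (sub_add_cancel_left (((p : ℕ) : ℝ) ^ (-s)) _).symm,
    hP.tsum_sub hf, sub_sub_cancel]

/-- As `s → 1⁺`, the prime zeta function satisfies `P(s) = log(1/(s-1)) + O(1)`. -/
theorem primeZeta_log_asymptotic :
    ∃ C : ℝ, 0 < C ∧ ∃ δ : ℝ, 0 < δ ∧ ∀ s : ℝ, 1 < s → s < 1 + δ →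
      |(∑' p : Nat.Primes, ((p : ℕ) : ℝ) ^ (-s)) - Real.log (1 / (s - 1))| ≤ C := by
  have hζ : ∀ᶠ s : ℝ in 𝓝[>] 1, |Real.log (riemannZeta s).re + Real.log (s - 1)| ≤ 1 := by
    simpa using log_riemannZeta_add_log_sub_isLittleO_ofReal.bound one_pos
  obtain ⟨u, hu, hζ⟩ := (nhdsGT_basis 1).eventually_iff.mp hζ
  set K := ∑' p : Nat.Primes, ((p : ℕ) : ℝ) ^ (-2 : ℝ)
  have hK : 0 ≤ K := tsum_nonneg fun p ↦ by positivity
  refine ⟨2 * K + 1, by positivity, u - 1, by linarith, fun s hs hsu ↦ ?_⟩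
  calc _ = |(∑' p : Nat.Primes, ((p : ℕ) : ℝ) ^ (-s)) - Real.log (riemannZeta s).re +
        (Real.log (riemannZeta s).re + Real.log (s - 1))| := by
        rw [one_div, Real.log_inv]; ring_nf
    _ ≤ 2 * K + 1 := by
      rw [tsum_prime_rpow_neg_sub_log_re_riemannZeta hs]
      exact (abs_add_le _ _).trans <| add_le_add
        (Nat.Primes.abs_tsum_rpow_neg_add_log_one_sub_le hs.le) (hζ ⟨hs, by linarith⟩)
end
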